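/- arXiv:2301.10318 — 4 statements merged into one kernel-verified Lean document; each statement's English description precedes it below -/
import Mathlib

section
/- Let C be a small category, O an object, and 𝒪 a pullback-closed family of 'neighborhoods' of O as above. Define A : C → Set by letting A(U) be the set of ∼-equivalence classes [Φ] of arrows Φ : O' → U with O' ∈ 𝒪, and A(Ψ : U → V)([Φ]) = [Ψ ∘ Φ]. Then A is a filtering functor: (i) A(O') ≠ ∅ for O' ∈ 𝒪; (ii) any two classes [Ψ₁] ∈ A(U₁), [Ψ₂] ∈ A(U₂) are connected by a span through the pullback of the two neighborhoods over O; (iii) any parallel pair Φ₁, Φ₂ : U → V identified on some class admits an equalizing arrow through a smaller neighborhood. -/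
open CategoryTheory

/-- The germ equivalence relation on arrows out of neighborhoods of `O`: two arrows are
related if they agree after precomposition with a common smaller neighborhood. -/
def NbhdRel {C : Type*} [Category C] {N : Type*} (obj : N → C) {O : C}
    (str : ∀ n, obj n ⟶ O) (U : C) :
    (Σ n, obj n ⟶ U) → (Σ n, obj n ⟶ U) → Prop :=
  fun a b => ∃ (k : N) (p : obj k ⟶ obj a.1) (q : obj k ⟶ obj b.1),
    p ≫ str a.1 = str k ∧ q ≫ str b.1 = str k ∧ p ≫ a.2 = q ≫ b.2

/-- The "germ functor" value at `U`: equivalence classes of arrows from neighborhoods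
of `O` to `U`. -/
def AObj {C : Type*} [Category C] {N : Type*} (obj : N → C) {O : C}
    (str : ∀ n, obj n ⟶ O) (U : C) : Type _ :=
  Quot (NbhdRel obj str U)

/-- The action of an arrow `Ψ : U ⟶ V` on germ classes, by postcomposition. -/
def Amap {C : Type*} [Category C] {N : Type*} (obj : N → C) {O : C}
    (str : ∀ n, obj n ⟶ O) {U V : C} (Ψ : U ⟶ V) :
    AObj obj str U → AObj obj str V :=
  Quot.map (fun a => (⟨a.1, a.2 ≫ Ψ⟩ : Σ n, obj n ⟶ V))
    (by
      rintro a b ⟨k, p, q, h1, h2, h3⟩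
      exact ⟨k, p, q, h1, h2, by rw [← Category.assoc, h3, Category.assoc]⟩)

lemma nbhdRel_equiv {C : Type*} [Category C] {N : Type*} (obj : N → C) {O : C}
    (str : ∀ n, obj n ⟶ O)
    (hMono : ∀ n, Mono (str n))
    (hPB : ∀ n m : N, ∃ (k : N) (p : obj k ⟶ obj n) (q : obj k ⟶ obj m),
      p ≫ str n = str k ∧ q ≫ str m = str k) (U : C) :
    Equivalence (NbhdRel obj str U) := by
  constructor
  · intro a
    exact ⟨a.1, 𝟙 _, 𝟙 _, by simp, by simp, rfl⟩
  · rintro a b ⟨k, p, q, h1, h2, h3⟩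
    exact ⟨k, q, p, h2, h1, h3.symm⟩
  · rintro a b c ⟨k, p, q, h1, h2, h3⟩ ⟨k', p', q', h1', h2', h3'⟩
    obtain ⟨j, r, s, hr, hs⟩ := hPB k k'
    refine ⟨j, r ≫ p, s ≫ q', ?_, ?_, ?_⟩
    · rw [Category.assoc, h1, hr]
    · rw [Category.assoc, h2', hs]
    · have hmono := hMono b.1
      have key : r ≫ q = s ≫ p' := by
        rw [← cancel_mono (str b.1), Category.assoc, Category.assoc, h2, h1', hr, hs]
      rw [Category.assoc, Category.assoc, h3, ← Category.assoc, key,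
        Category.assoc, h3']

/-- The germ functor `A` built from a pullback-closed system of neighborhoods of `O`
(with monic structure arrows) is filtering: (i) it is nonempty on each neighborhood;
(ii) any two classes are connected by a span; (iii) parallel arrows identified on a
class admit an equalizing arrow. -/
theorem stmt_7 {C : Type*} [Category C] {N : Type*} (obj : N → C) {O : C}
    (str : ∀ n, obj n ⟶ O)
    (hMono : ∀ n, Mono (str n))
    (hPB : ∀ n m : N, ∃ (k : N) (p : obj k ⟶ obj n) (q : obj k ⟶ obj m),
      p ≫ str n = str k ∧ q ≫ str m = str k) :
    (∀ n : N, Nonempty (AObj obj str (obj n))) ∧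
    (∀ (U₁ U₂ : C) (a : AObj obj str U₁) (b : AObj obj str U₂),
      ∃ (W : C) (f : W ⟶ U₁) (g : W ⟶ U₂) (d : AObj obj str W),
        Amap obj str f d = a ∧ Amap obj str g d = b) ∧
    (∀ (U V : C) (f g : U ⟶ V) (c : AObj obj str U),
      Amap obj str f c = Amap obj str g c →
      ∃ (W : C) (e : W ⟶ U) (b : AObj obj str W),
        e ≫ f = e ≫ g ∧ Amap obj str e b = c) := by
  refine ⟨fun n => ⟨Quot.mk _ ⟨n, 𝟙 _⟩⟩, ?_, ?_⟩
  · intro U₁ U₂ a b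
    induction a using Quot.ind with | _ a =>
    induction b using Quot.ind with | _ b =>
    obtain ⟨k, p, q, h1, h2⟩ := hPB a.1 b.1
    refine ⟨obj k, p ≫ a.2, q ≫ b.2, Quot.mk _ ⟨k, 𝟙 _⟩, ?_, ?_⟩
    · exact Quot.sound ⟨k, 𝟙 _, p, by simp, h1, by simp⟩
    · exact Quot.sound ⟨k, 𝟙 _, q, by simp, h2, by simp⟩
  · intro U V f g c h
    induction c using Quot.ind with | _ c =>
    have h' : NbhdRel obj str V ⟨c.1, c.2 ≫ f⟩ ⟨c.1, c.2 ≫ g⟩ :=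
      ((nbhdRel_equiv obj str hMono hPB V).eqvGen_iff).mp (Quot.eqvGen_exact h)
    obtain ⟨k, p, q, h1, h2, h3⟩ := h'
    have hpq : p = q := by rw [← cancel_mono (str c.1), h1, h2]
    refine ⟨obj k, p ≫ c.2, Quot.mk _ ⟨k, 𝟙 _⟩, ?_, ?_⟩
    · simp only [Category.assoc]
      rw [hpq] at h3 ⊢
      exact h3
    · exact Quot.sound ⟨k, 𝟙 _, p, by simp, h1, by simp⟩
end

section
/- Let C be a small category whose arrows are (interpreted as) injective functions between sets of points, let F : C → Set be the evident forgetful functor, and suppose A, B : C → Set are functors each of which 'determines' a point of every object in the sense of Lemma 4.3 (each u ∈ A(U) determines a unique point K_u ∈ F(U) as the unique element of the intersection of images of arrows through which u lifts). If α : A → B is a natural transformation, then for every object U and every u ∈ A(U), the point of U determined by α_U(u) ∈ B(U) equals the point determined by u ∈ A(U). -/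
open CategoryTheory

universe w w'

/-- The set of points of `U` (via the points functor `F`) determined by an element
`u ∈ A(U)`: those points lying in the image of `F.map f` for every arrow `f : V ⟶ U`
through which `u` lifts. -/
def Det {C : Type*} [Category C] (F : C ⥤ Type w) (A : C ⥤ Type w') (U : C) (u : A.obj U) :
    Set (F.obj U) :=
  {x | ∀ (V : C) (f : V ⟶ U) (v : A.obj V), A.map f v = u → x ∈ Set.range (F.map f)}

/-- By naturality, every lift `v` of `u` along `f` gives the lift `α_V v` of `α_U u`, so `α_U u`
lifts through at least the arrows `u` lifts through. -/
theorem Det_app_subset {C : Type*} [Category C] (F : C ⥤ Type w) {A B : C ⥤ Type w'}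
    (α : A ⟶ B) (U : C) (u : A.obj U) : Det F B U (α.app U u) ⊆ Det F A U u := by
  intro x hx V f v hv
  exact hx V f (α.app V v) (by rw [← NatTrans.naturality_apply, hv])

theorem stmt_8_general {C : Type*} [Category C] (F : C ⥤ Type w) (A B : C ⥤ Type w')
    (α : A ⟶ B) :
    ∀ (U : C) (u : A.obj U) (x y : F.obj U),
      Det F A U u = {x} → Det F B U (α.app U u) = {y} → x = y := by
  intro U u x y hx hy
  have hy_mem : y ∈ Det F A U u := Det_app_subset F α U u (hy ▸ rfl)
  rw [hx] at hy_mem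
  exact hy_mem.symm

/-- If `A` and `B` both determine points (each `Det` set is a singleton), arrows act as
injective maps of points, and `α : A ⟶ B` is a natural transformation, then for every
`u ∈ A(U)` the point determined by `α_U(u) ∈ B(U)` equals the point determined by `u`. -/
theorem stmt_8 {C : Type*} [Category C] (F : C ⥤ Type w) (A B : C ⥤ Type w')
    (hinj : ∀ {V U : C} (f : V ⟶ U), Function.Injective (F.map f))
    (hA : ∀ (U : C) (u : A.obj U), ∃ x : F.obj U, Det F A U u = {x})
    (hB : ∀ (U : C) (u : B.obj U), ∃ x : F.obj U, Det F B U u = {x})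
    (α : A ⟶ B) :
    ∀ (U : C) (u : A.obj U) (x y : F.obj U),
      Det F A U u = {x} → Det F B U (α.app U u) = {y} → x = y :=
  stmt_8_general F A B α
end

section
/- Let X be a topological space and let σ : [0,1] → π₀(∫_K F) be a function into the set of connected components of the category of elements of the forgetful functor F on the poset of open sets of X. Suppose σ satisfies the local continuity property (⋆): for every open U ⊆ X, every t ∈ [0,1], and every point x ∈ U with (U,x) in the component σ(t), there is a neighborhood N of t in [0,1] and a continuous map σ_U^N : N → U with σ_U^N(t) = x and (U, σ_U^N(s)) in σ(s) for all s ∈ N. Then the map σ_X : [0,1] → X defined by σ_X(t) = the unique point x with (X, x) ∈ σ(t) is a well-defined continuous path in X. -/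
open CategoryTheory TopologicalSpace

/-- The forgetful functor sending an open set of `X` to its set of points. -/
def forgetPoints (X : Type*) [TopologicalSpace X] : Opens X ⥤ Type _ where
  obj U := { x : X // x ∈ U }
  map {U V} f := TypeCat.ofHom fun x => ⟨x.1, leOfHom f x.2⟩

/-!
Morphisms of `∫ forgetPoints X` are inclusions `(U, x) → (V, x)` that keep the point, so the
point is constant on components. Conversely every `(U, x)` maps to `(X, x)`, so a component is
determined by its point; `(⋆)` at `U = X` then says exactly that this point depends continuously
on `t`.
-/

namespace forgetPoints

variable {X : Type*} [TopologicalSpace X]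

lemma val_eq_of_zigzag {a b : (forgetPoints X).Elements} (h : Zigzag a b) :
    a.2.1 = b.2.1 := by
  induction h with
  | refl => rfl
  | tail _ hstep ih =>
    rcases hstep with ⟨⟨f⟩⟩ | ⟨⟨f⟩⟩
    · exact ih.trans (congrArg Subtype.val f.2)
    · exact ih.trans (congrArg Subtype.val f.2).symm

def componentPoint : Quot (Zigzag (J := (forgetPoints X).Elements)) → X :=
  Quot.lift (fun e => e.2.1) fun _ _ => val_eq_of_zigzag

lemma mk_eq_mk_top (e : (forgetPoints X).Elements) :
    Quot.mk (Zigzag (J := (forgetPoints X).Elements)) e = Quot.mk Zigzag ⟨⊤, ⟨e.2.1, trivial⟩⟩ :=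
  Quot.sound (Relation.ReflTransGen.single (Or.inl ⟨⟨homOfLE le_top, rfl⟩⟩))

lemma eq_mk_top_iff (c : Quot (Zigzag (J := (forgetPoints X).Elements))) (x : X)
    (hx : x ∈ (⊤ : Opens X)) :
    c = Quot.mk Zigzag ⟨⊤, ⟨x, hx⟩⟩ ↔ componentPoint c = x := by
  induction c using Quot.ind with
  | mk e =>
    refine ⟨fun h => h ▸ rfl, fun h => ?_⟩
    rw [mk_eq_mk_top e]
    subst h
    rfl

end forgetPoints

open forgetPoints in
/-- If `σ : [0,1] → π₀(∫F)` (components of the category of elements of the forgetful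
functor on opens of `X`) satisfies the local continuity property `(⋆)`, then there is a
continuous path `γ : [0,1] → X` such that, for every `t`, `σ t` is the component of
`(X, γ t)`; i.e. `t ↦ (the unique point x with (X,x) ∈ σ t)` is a well-defined
continuous path. -/
theorem stmt_9 {X : Type*} [TopologicalSpace X]
    (σ : unitInterval → Quot (Zigzag (J := (forgetPoints X).Elements)))
    (hstar : ∀ (U : Opens X) (t : unitInterval) (x : X) (hx : x ∈ U),
      σ t = Quot.mk Zigzag ⟨U, ⟨x, hx⟩⟩ →
      ∃ N ∈ nhds t, ∃ g : unitInterval → X, ContinuousOn g N ∧ g t = x ∧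
        ∀ s ∈ N, ∃ hs : g s ∈ U, σ s = Quot.mk Zigzag ⟨U, ⟨g s, hs⟩⟩) :
    ∃ γ : unitInterval → X, Continuous γ ∧
      ∀ (t : unitInterval) (x : X) (hx : x ∈ (⊤ : Opens X)),
        (σ t = Quot.mk Zigzag ⟨⊤, ⟨x, hx⟩⟩ ↔ γ t = x) := by
  refine ⟨fun t => componentPoint (σ t), ?_, fun t x hx => eq_mk_top_iff (σ t) x hx⟩
  refine continuous_iff_continuousAt.mpr fun t => ?_
  obtain ⟨N, hN, g, hg, -, hgσ⟩ :=
    hstar ⊤ t _ trivial ((eq_mk_top_iff (σ t) _ trivial).mpr rfl)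
  have hg_eq : ∀ s ∈ N, g s = componentPoint (σ s) := fun s hs => by
    obtain ⟨hs', hσs⟩ := hgσ s hs
    exact ((eq_mk_top_iff (σ s) _ hs').mp hσs).symm
  exact (hg.continuousAt hN).congr (Filter.eventuallyEq_of_mem hN hg_eq)
end

section
/- Let C be a category of open subsets of topological spaces with injective open continuous maps as arrows, and let A be a functor to Set with the following properties: (1) A(∅) = ∅ on the empty object and A of a terminal/maximal object is a one-point set; (2) A satisfies the filtering span condition; (3) A maps covers to jointly epimorphic families. Let C₀ be a path-connected object (path component). Suppose for each point of C₀ covered by some arrow Ψ : U → C₀ in a fixed covering family there is a unique hΨ ∈ G with A(\{hΨ\})(U) ≠ ∅. If any two covering arrows with overlapping images have equal associated elements of G, and C₀ is path connected with compact paths coverable by finitely many members of the cover, then there is a single h ∈ G with A({h})(U) ≠ ∅ for all covering arrows U → C₀, and moreover A({h})(C₀) ≠ ∅. -/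
open TopologicalSpace

/-- Abstraction of Lemma 6.11: `A H U` models the set of sections `A(H)(U)` of a
continuous filtering functor `A : G → Sh(Y)` over an open set `U` of a path-connected
space `Y`, with restriction maps `res` (enlarging `H` and shrinking `U`).  Assume the
values on the empty subset are empty (on nonempty opens), the value on `univ` is
nonempty, all values are subsingletons (one-point or empty), the filtering span
condition, the joint-epimorphy of covers, and the sheaf gluing condition.  If a covering
family `Ufam` of `Y` is such that each member carries a unique `h ∈ G` with
`A {h} (Ufam i)` nonempty, and overlapping members carry equal elements, then there is a
single `h ∈ G` working for all members, and moreover `A {h}` is nonempty on all of `Y`. -/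
theorem stmt_16 {Y : Type*} [TopologicalSpace Y] [PathConnectedSpace Y] {G : Type*}
    (A : Set G → Opens Y → Type*)
    (res : ∀ {H H' : Set G}, H ⊆ H' → ∀ {U V : Opens Y}, V ≤ U → A H U → A H' V)
    (hempty : ∀ U : Opens Y, U ≠ ⊥ → IsEmpty (A ∅ U))
    (hterm : ∀ U : Opens Y, Nonempty (A Set.univ U))
    (hsub : ∀ (H : Set G) (U : Opens Y), Subsingleton (A H U))
    (hspan : ∀ (H H' : Set G) (U : Opens Y) (u : A H U) (v : A H' U),
      ∃ (M : Set G) (hMH : M ⊆ H) (hMH' : M ⊆ H') (w : A M U),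
        res hMH le_rfl w = u ∧ res hMH' le_rfl w = v)
    (hepi : ∀ (H : Set G) (U : Opens Y) (u : A H U),
      ∃ (κ : Type) (V : κ → Opens Y) (hVU : ∀ k, V k ≤ U), iSup V = U ∧
        ∀ k, ∃ (h : G) (hh : h ∈ H) (w : A {h} (V k)),
          res (Set.singleton_subset_iff.mpr hh) le_rfl w =
            res (Set.Subset.refl H) (hVU k) u)
    (hglue : ∀ (H : Set G) (U : Opens Y) (κ : Type) (V : κ → Opens Y),
      (∀ k, V k ≤ U) → iSup V = U → (∀ k, Nonempty (A H (V k))) →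
      Nonempty (A H U))
    {ι : Type*} [Nonempty ι] (Ufam : ι → Opens Y) (hUfam : iSup Ufam = ⊤)
    (hloc : ∀ i, ∃! h : G, Nonempty (A {h} (Ufam i)))
    (hoverlap : ∀ (i j : ι) (h h' : G), Nonempty (A {h} (Ufam i)) →
      Nonempty (A {h'} (Ufam j)) → Ufam i ⊓ Ufam j ≠ ⊥ → h = h') :
    ∃ h : G, (∀ i, Nonempty (A {h} (Ufam i))) ∧
      Nonempty (A {h} (⊤ : Opens Y)) := by
  classical
  -- The value on ⊥ is always nonempty (glue the empty cover).
  have hbot : ∀ H : Set G, Nonempty (A H ⊥) := by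
    intro H
    refine hglue H ⊥ Empty Empty.elim (fun k => k.elim) ?_ (fun k => k.elim)
    simp
  -- local element on each member
  set hf : ι → G := fun i => (hloc i).choose with hhf
  have hfspec : ∀ i, Nonempty (A {hf i} (Ufam i)) := fun i => (hloc i).choose_spec.1
  have hmemU : ∀ y : Y, ∃ i, y ∈ Ufam i := by
    intro y
    have : y ∈ (⊤ : Opens Y) := trivial
    rw [← hUfam] at this
    simpa [Opens.mem_iSup] using this
  obtain ⟨y₀⟩ : Nonempty Y := inferInstance
  obtain ⟨i₀, hi₀⟩ := hmemU y₀
  set h := hf i₀ with hh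
  -- intersections containing a point are not ⊥
  have hne : ∀ (U V : Opens Y) (y : Y), y ∈ U → y ∈ V → U ⊓ V ≠ ⊥ := by
    intro U V y hyU hyV hb
    have : y ∈ U ⊓ V := ⟨hyU, hyV⟩
    rw [hb] at this
    exact this
  -- connectedness / chain argument: every nonempty member carries h
  have key : ∀ i, (Ufam i : Set Y).Nonempty → hf i = h := by
    intro i ⟨y, hy⟩
    set S : Set Y := ⋃ j ∈ {j : ι | hf j = h}, (Ufam j : Set Y) with hS
    have hSopen : IsOpen S := isOpen_biUnion fun j _ => (Ufam j).2
    have hTopen : IsOpen Sᶜ := by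
      have hcompl : Sᶜ = ⋃ j ∈ {j : ι | hf j ≠ h}, (Ufam j : Set Y) := by
        apply Set.eq_of_subset_of_subset
        · intro z hz
          obtain ⟨j, hj⟩ := hmemU z
          have hjh : hf j ≠ h := by
            intro hjh
            exact hz (Set.mem_biUnion hjh hj)
          exact Set.mem_biUnion hjh hj
        · intro z hz hzS
          obtain ⟨j, hjh, hj⟩ := by simpa using hz
          obtain ⟨j', hj'h, hj'⟩ := by simpa [hS] using hzS
          exact hjh ((hoverlap j j' (hf j) (hf j') (hfspec j) (hfspec j')
            (hne _ _ z hj hj')).trans hj'h)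
      rw [hcompl]
      exact isOpen_biUnion fun j _ => (Ufam j).2
    have hclopen : IsClopen S := ⟨⟨hTopen⟩, hSopen⟩
    have hSuniv : S = Set.univ :=
      hclopen.eq_univ ⟨y₀, Set.mem_biUnion rfl hi₀⟩
    have hyS : y ∈ S := hSuniv ▸ Set.mem_univ y
    obtain ⟨j, hjh, hj⟩ := by simpa [hS] using hyS
    exact (hoverlap i j (hf i) (hf j) (hfspec i) (hfspec j)
      (hne _ _ y hy hj)).trans hjh
  have hall : ∀ i, Nonempty (A {h} (Ufam i)) := by
    intro i
    by_cases hb : (Ufam i : Set Y).Nonempty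
    · rw [← key i hb]; exact hfspec i
    · have : Ufam i = ⊥ := by
        ext x
        simp only [Opens.coe_bot, Set.mem_empty_iff_false, iff_false]
        intro hx
        exact hb ⟨x, hx⟩
      rw [this]
      exact hbot _
  refine ⟨h, hall, ?_⟩
  -- glue: use the epi condition on a global section over Set.univ
  obtain ⟨u⟩ := hterm (⊤ : Opens Y)
  obtain ⟨κ, V, hVU, hVsup, hVloc⟩ := hepi Set.univ ⊤ u
  refine hglue {h} ⊤ κ V hVU hVsup ?_
  intro k
  obtain ⟨g, hg, w, -⟩ := hVloc k
  by_cases hb : (V k : Set Y).Nonempty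
  · -- show g = h using the span condition on V k ⊓ Ufam i for y ∈ V k
    obtain ⟨y, hy⟩ := hb
    obtain ⟨i, hi⟩ := hmemU y
    have hUne : V k ⊓ Ufam i ≠ ⊥ := hne _ _ y hy hi
    have w1 : A {g} (V k ⊓ Ufam i) :=
      res (Set.Subset.refl _) inf_le_left w
    obtain ⟨v⟩ := hall i
    have w2 : A {h} (V k ⊓ Ufam i) :=
      res (Set.Subset.refl _) inf_le_right v
    obtain ⟨M, hMg, hMh, wM, -, -⟩ := hspan {g} {h} (V k ⊓ Ufam i) w1 w2
    have hMne : M.Nonempty := by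
      rcases Set.eq_empty_or_nonempty M with hM | hM
      · exact ((hempty _ hUne).false (hM ▸ wM)).elim
      · exact hM
    obtain ⟨m, hm⟩ := hMne
    have : g = h := by
      have h1 : m = g := hMg hm
      have h2 : m = h := hMh hm
      rw [← h1, h2]
    exact ⟨this ▸ w⟩
  · have : V k = ⊥ := by
      ext x
      simp only [Opens.coe_bot, Set.mem_empty_iff_false, iff_false]
      intro hx
      exact hb ⟨x, hx⟩
    rw [this]
    exact hbot _
end
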